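/- For the two challenged smart meters masked with independent uniform shares s₀, s₁ ∈ ZMod k, the joint distribution of (m_b + s₀, m_{1-b} + s₁, s₀ + s₁ + c) is the same for b = 0 and b = 1, for any constant c ∈ ZMod k and any measurements m₀, m₁. -/

import Mathlib

theorem PMF.map_equiv_uniformOfFintype {α : Type*} [Fintype α] [Nonempty α] (e : α ≃ α) :
    (PMF.uniformOfFintype α).map e = PMF.uniformOfFintype α := by
  ext x
  rw [PMF.map_apply, tsum_eq_single (e.symm x) fun a ha => if_neg fun h => ha (by simp [h])]
  simp

theorem PMF.map_comp_equiv_uniformOfFintype {α β : Type*} [Fintype α] [Nonempty α]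
    (e : α ≃ α) (f : α → β) :
    (PMF.uniformOfFintype α).map (f ∘ e) = (PMF.uniformOfFintype α).map f := by
  rw [← PMF.map_comp, PMF.map_equiv_uniformOfFintype]

def maskedView {G : Type*} [Add G] (m₀ m₁ c : G) (s : G × G) : G × G × G :=
  (m₀ + s.1, m₁ + s.2, s.1 + s.2 + c)

theorem map_maskedView_uniformOfFintype_swap {G : Type*} [AddCommGroup G] [Fintype G]
    [Nonempty G] (m₀ m₁ c : G) :
    (PMF.uniformOfFintype (G × G)).map (maskedView m₀ m₁ c)
      = (PMF.uniformOfFintype (G × G)).map (maskedView m₁ m₀ c) := by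
  -- Shifting the shares by `(m₁ - m₀, m₀ - m₁)` swaps the masked values and fixes their sum.
  let shift : G × G ≃ G × G := (Equiv.addLeft (m₁ - m₀)).prodCongr (Equiv.addLeft (m₀ - m₁))
  rw [← PMF.map_comp_equiv_uniformOfFintype shift]
  congr 1
  funext s
  simp only [maskedView, shift, Function.comp_apply, Equiv.prodCongr_apply, Prod.map,
    Equiv.coe_addLeft, Prod.mk.injEq]
  refine ⟨?_, ?_, ?_⟩ <;> abel

/-- The adversary's view `(m_b + s₀, m_{1-b} + s₁, s₀ + s₁ + c)` with
independent uniform shares `s₀, s₁` has the same distribution for both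
assignments `b = 0` and `b = 1`. -/
theorem masked_view_independent_of_assignment (k : ℕ) [NeZero k]
    (m₀ m₁ c : ZMod k) :
    (PMF.uniformOfFintype (ZMod k × ZMod k)).map
        (fun p => (m₀ + p.1, m₁ + p.2, p.1 + p.2 + c))
      = (PMF.uniformOfFintype (ZMod k × ZMod k)).map
        (fun p => (m₁ + p.1, m₀ + p.2, p.1 + p.2 + c)) :=
  map_maskedView_uniformOfFintype_swap m₀ m₁ c
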